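/- arXiv:1911.08014 — 2 statements merged into one kernel-verified Lean document; each statement's English description precedes it below -/
import Mathlib

section
/- Two positive quadruples of Lagrangians (L1, M1, L2, M2) and (L1', M1', L2', M2') in (ℝ^{2n}, ω) have the same invariant Λ ∈ Δ_n (the unique diagonal matrix occurring in any symplectic basis in standard position) if and only if there exists g ∈ Sp(2n,ℝ) with g·L1 = L1', g·M1 = M1', g·L2 = L2', g·M2 = M2'. Moreover, every Λ ∈ Δ_n is the invariant of some positive quadruple. Hence the invariant Λ induces a bijection between the set of Sp(2n,ℝ)-orbits of positive quadruples of Lagrangians and Δ_n. -/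
open Matrix

noncomputable section

/-- The symplectic vector space `ℝ^{2n}`, with coordinates indexed by `Fin n ⊕ Fin n`. -/
abbrev V2 (n : ℕ) : Type := (Fin n ⊕ Fin n) → ℝ

/-- The standard matrix `J = [[0, Id],[−Id, 0]]`. -/
def Jn (n : ℕ) : Matrix (Fin n ⊕ Fin n) (Fin n ⊕ Fin n) ℝ :=
  Matrix.fromBlocks 0 1 (-1) 0

/-- The standard symplectic form `ω(x,y) = ᵀx J y` on `ℝ^{2n}`. -/
def omegaForm (n : ℕ) (x y : V2 n) : ℝ := x ⬝ᵥ (Jn n).mulVec y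

/-- A subspace is Lagrangian if it has dimension `n` and `ω` vanishes on it. -/
def IsLagrangian (n : ℕ) (L : Submodule ℝ (V2 n)) : Prop :=
  Module.finrank ℝ L = n ∧ ∀ x ∈ L, ∀ y ∈ L, omegaForm n x y = 0

/-- Membership in `Sp(2n,ℝ)`: `ᵀg J g = J`. -/
def IsSymplectic (n : ℕ) (g : Matrix (Fin n ⊕ Fin n) (Fin n ⊕ Fin n) ℝ) : Prop :=
  gᵀ * Jn n * g = Jn n

/-- `φ : L → L'` is the map whose graph is `M`, i.e. `M = {e + φ e : e ∈ L}`. -/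
def IsGraphMap (n : ℕ) (L M L' : Submodule ℝ (V2 n)) (φ : L →ₗ[ℝ] L') : Prop :=
  ∀ x : V2 n, x ∈ M ↔ ∃ e : L, x = (e : V2 n) + (φ e : V2 n)

/-- `tmul v g` is the tuple `v·g`, with `(v·g)_j = Σ_i g_{ij} • v_i`. -/
def tmul (n : ℕ) (v : Fin n → V2 n) (g : Matrix (Fin n) (Fin n) ℝ) : Fin n → V2 n :=
  fun j => ∑ i, g i j • v i

/-- A symplectic basis of `ℝ^{2n}`: a pair of `n`-tuples forming a basis, with
`ω(e_i,e_j) = ω(f_i,f_j) = 0` and `ω(e_i,f_j) = δ_{ij}`. -/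
def IsSymplecticBasis (n : ℕ) (e f : Fin n → V2 n) : Prop :=
  (∀ i j, omegaForm n (e i) (e j) = 0) ∧ (∀ i j, omegaForm n (f i) (f j) = 0) ∧
  (∀ i j, omegaForm n (e i) (f j) = if i = j then 1 else 0) ∧
  LinearIndependent ℝ (Sum.elim e f) ∧
  Submodule.span ℝ (Set.range (Sum.elim e f)) = ⊤

/-- Membership in `Δ_n`: diagonal matrices with positive nondecreasing entries. -/
def InDelta (n : ℕ) (Λ : Matrix (Fin n) (Fin n) ℝ) : Prop :=
  ∃ d : Fin n → ℝ, Λ = Matrix.diagonal d ∧ (∀ i, 0 < d i) ∧ Monotone d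

/-- A positive quadruple of Lagrangians: the triples `(L1,M1,L2)` and `(L1,M2,L2)` are
pairwise transverse, and the Maslov forms `[L1,M1,L2]` and `[L2,M2,L1]` are positive
definite. -/
def PositiveQuadruple (n : ℕ) (L1 M1 L2 M2 : Submodule ℝ (V2 n)) : Prop :=
  IsLagrangian n L1 ∧ IsLagrangian n M1 ∧ IsLagrangian n L2 ∧ IsLagrangian n M2 ∧
  L1 ⊓ M1 = ⊥ ∧ M1 ⊓ L2 = ⊥ ∧ L1 ⊓ L2 = ⊥ ∧ L1 ⊓ M2 = ⊥ ∧ M2 ⊓ L2 = ⊥ ∧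
  (∃ φ : L1 →ₗ[ℝ] L2, IsGraphMap n L1 M1 L2 φ ∧
    ∀ v : ↥L1, v ≠ 0 → 0 < omegaForm n (v : V2 n) (φ v : V2 n)) ∧
  (∃ ψ : L2 →ₗ[ℝ] L1, IsGraphMap n L2 M2 L1 ψ ∧
    ∀ w : ↥L2, w ≠ 0 → 0 < omegaForm n (w : V2 n) (ψ w : V2 n))

/-- A symplectic basis `(e,f)` is in standard position with respect to `(L1,M1,L2,M2)`,
with invariant `Λ ∈ Δ_n`, if `L1 = Span e`, `L2 = Span f`, `M1 = Span (e+f)` and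
`M2 = Span (e − f·Λ)`. -/
def StandardPosition (n : ℕ) (e f : Fin n → V2 n)
    (L1 M1 L2 M2 : Submodule ℝ (V2 n)) (Λ : Matrix (Fin n) (Fin n) ℝ) : Prop :=
  IsSymplecticBasis n e f ∧ InDelta n Λ ∧
  L1 = Submodule.span ℝ (Set.range e) ∧
  L2 = Submodule.span ℝ (Set.range f) ∧
  M1 = Submodule.span ℝ (Set.range (e + f)) ∧
  M2 = Submodule.span ℝ (Set.range (e - tmul n f Λ))

/-!
A symplectic basis `(e, f)` in standard position is the image of the standard basis under the
matrix `P` with columns `e, f`, and `P` is symplectic because its Gram matrix for `ω` is `J`. So a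
quadruple with invariant `Λ` is the image under `P` of the model quadruple
`(Span e, Span (e + f), Span f, Span (e - f·Λ))` in the standard basis, and two quadruples with the
same invariant are related by `P' P⁻¹`.

Conversely, a matrix carrying the model for `diag d` onto the model for `diag d'` preserves
`Span e` and `Span f`, hence is block diagonal `diag(A, D)`; preserving `Span (e + f)` forces
`D = A`, and preserving the fourth subspace forces `A diag d = diag d' A`. Then `diag d` and
`diag d'` have the same characteristic polynomial, and being sorted they are equal.

The model quadruple is positive: its Maslov forms are `Σ x_i²` and `Σ y_i² / d_i`.
-/

open Submodule Set

section Symplectic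

variable {n : ℕ}

lemma Jn_eq_neg_J (n : ℕ) : Jn n = -J (Fin n) ℝ := by
  simp [Jn, J, fromBlocks_neg]

lemma isSymplectic_iff_mem_symplecticGroup {g : Matrix (Fin n ⊕ Fin n) (Fin n ⊕ Fin n) ℝ} :
    IsSymplectic n g ↔ g ∈ symplecticGroup (Fin n) ℝ := by
  rw [SymplecticGroup.mem_iff', IsSymplectic, Jn_eq_neg_J, Matrix.mul_neg, Matrix.neg_mul,
    neg_inj]

lemma IsSymplectic.mul {g h : Matrix (Fin n ⊕ Fin n) (Fin n ⊕ Fin n) ℝ} (hg : IsSymplectic n g)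
    (hh : IsSymplectic n h) : IsSymplectic n (g * h) := by
  rw [isSymplectic_iff_mem_symplecticGroup] at *
  exact mul_mem hg hh

lemma IsSymplectic.inv {g : Matrix (Fin n ⊕ Fin n) (Fin n ⊕ Fin n) ℝ} (hg : IsSymplectic n g) :
    IsSymplectic n g⁻¹ := by
  rw [isSymplectic_iff_mem_symplecticGroup] at *
  simpa [SymplecticGroup.coe_inv'] using (⟨g, hg⟩⁻¹ : symplecticGroup (Fin n) ℝ).2

lemma IsSymplectic.isUnit_det {g : Matrix (Fin n ⊕ Fin n) (Fin n ⊕ Fin n) ℝ}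
    (hg : IsSymplectic n g) : IsUnit g.det :=
  SymplecticGroup.symplectic_det (isSymplectic_iff_mem_symplecticGroup.mp hg)

lemma omegaForm_apply (x y : V2 n) :
    omegaForm n x y = ∑ i, (x (Sum.inl i) * y (Sum.inr i) - x (Sum.inr i) * y (Sum.inl i)) := by
  simp [omegaForm, Jn, fromBlocks_mulVec, dotProduct, Fintype.sum_sum_type, sub_eq_add_neg,
    neg_mulVec, Finset.sum_add_distrib]

lemma omegaForm_swap (x y : V2 n) : omegaForm n y x = -omegaForm n x y := by
  simp only [omegaForm_apply, ← Finset.sum_neg_distrib]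
  exact Finset.sum_congr rfl fun i _ => by ring

lemma transpose_mul_Jn_mul_apply (g : Matrix (Fin n ⊕ Fin n) (Fin n ⊕ Fin n) ℝ)
    (k l : Fin n ⊕ Fin n) :
    (gᵀ * Jn n * g) k l = omegaForm n (g *ᵥ Pi.single k 1) (g *ᵥ Pi.single l 1) := by
  rw [omegaForm, mulVec_mulVec, ← vecMul_transpose, ← dotProduct_mulVec, mulVec_mulVec,
    ← Matrix.mul_assoc, mulVec_single_one, single_one_dotProduct]
  rfl

end Symplectic

section BasisMatrix

variable {n : ℕ} {e f : Fin n → V2 n}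

def basisMatrix (e f : Fin n → V2 n) : Matrix (Fin n ⊕ Fin n) (Fin n ⊕ Fin n) ℝ :=
  (Matrix.of (Sum.elim e f))ᵀ

lemma basisMatrix_mulVec_single (e f : Fin n → V2 n) (k : Fin n ⊕ Fin n) :
    basisMatrix e f *ᵥ Pi.single k 1 = Sum.elim e f k := by
  rw [mulVec_single_one]
  rfl

lemma IsSymplecticBasis.omegaForm_elim (h : IsSymplecticBasis n e f) (k l : Fin n ⊕ Fin n) :
    omegaForm n (Sum.elim e f k) (Sum.elim e f l) = Jn n k l := by
  obtain ⟨hee, hff, hef, -, -⟩ := h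
  rcases k with i | i <;> rcases l with j | j
  · simp [hee, Jn]
  · simp [hef, Jn, one_apply]
  · rw [Sum.elim_inr, Sum.elim_inl, omegaForm_swap, hef]
    simp [Jn, one_apply, eq_comm]
  · simp [hff, Jn]

lemma IsSymplecticBasis.isSymplectic_basisMatrix (h : IsSymplecticBasis n e f) :
    IsSymplectic n (basisMatrix e f) := by
  ext k l
  rw [transpose_mul_Jn_mul_apply, basisMatrix_mulVec_single, basisMatrix_mulVec_single,
    h.omegaForm_elim]

variable (n) in
def stdE : Fin n → V2 n := fun i => Pi.single (Sum.inl i) 1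

variable (n) in
def stdF : Fin n → V2 n := fun i => Pi.single (Sum.inr i) 1

lemma basisMatrix_mulVec_stdE (e f : Fin n → V2 n) (i : Fin n) :
    basisMatrix e f *ᵥ stdE n i = e i :=
  basisMatrix_mulVec_single e f (Sum.inl i)

lemma basisMatrix_mulVec_stdF (e f : Fin n → V2 n) (i : Fin n) :
    basisMatrix e f *ᵥ stdF n i = f i :=
  basisMatrix_mulVec_single e f (Sum.inr i)

lemma isSymplecticBasis_std : IsSymplecticBasis n (stdE n) (stdF n) := by
  have hω (k l : Fin n ⊕ Fin n) : omegaForm n (Pi.single k 1) (Pi.single l 1) = Jn n k l := by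
    simpa only [transpose_one, Matrix.one_mul, Matrix.mul_one, one_mulVec] using
      (transpose_mul_Jn_mul_apply 1 k l).symm
  have hbasis : Sum.elim (stdE n) (stdF n) = Pi.basisFun ℝ (Fin n ⊕ Fin n) := by
    ext (i | i) <;> simp [stdE, stdF]
  refine ⟨fun i j => ?_, fun i j => ?_, fun i j => ?_, ?_, ?_⟩
  · simp [stdE, hω, Jn]
  · simp [stdF, hω, Jn]
  · simp [stdE, stdF, hω, Jn, one_apply]
  · exact hbasis ▸ (Pi.basisFun ℝ _).linearIndependent
  · exact hbasis ▸ (Pi.basisFun ℝ _).span_eq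

end BasisMatrix

section GraphQuadruple

variable {n : ℕ}

structure Quadruple (n : ℕ) where
  L1 : Submodule ℝ (V2 n)
  M1 : Submodule ℝ (V2 n)
  L2 : Submodule ℝ (V2 n)
  M2 : Submodule ℝ (V2 n)

namespace Quadruple

def map (g : Matrix (Fin n ⊕ Fin n) (Fin n ⊕ Fin n) ℝ) (Q : Quadruple n) : Quadruple n :=
  ⟨Q.L1.map g.mulVecLin, Q.M1.map g.mulVecLin, Q.L2.map g.mulVecLin, Q.M2.map g.mulVecLin⟩

lemma map_mul (g h : Matrix (Fin n ⊕ Fin n) (Fin n ⊕ Fin n) ℝ) (Q : Quadruple n) :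
    Q.map (g * h) = (Q.map h).map g := by
  simp only [map, mulVecLin_mul, Submodule.map_comp]

lemma map_inv_map {g : Matrix (Fin n ⊕ Fin n) (Fin n ⊕ Fin n) ℝ} (hg : IsUnit g.det)
    (Q : Quadruple n) : (Q.map g).map g⁻¹ = Q := by
  rw [← map_mul, nonsing_inv_mul _ hg]
  simp only [map, mulVecLin_one, Submodule.map_id]

end Quadruple

/-- The graph over `Span e` of the map `e_i ↦ c_i f_i`. -/
def graphSpan (e f : Fin n → V2 n) (c : Fin n → ℝ) : Submodule ℝ (V2 n) :=
  span ℝ (range fun i => e i + c i • f i)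

def graphQuadruple (e f : Fin n → V2 n) (d : Fin n → ℝ) : Quadruple n :=
  ⟨graphSpan e f 0, graphSpan e f 1, span ℝ (range f), graphSpan e f (-d)⟩

lemma tmul_diagonal (f : Fin n → V2 n) (d : Fin n → ℝ) (j : Fin n) :
    tmul n f (diagonal d) j = d j • f j := by
  simp [tmul, diagonal_apply, ite_smul]

lemma map_graphSpan (g : Matrix (Fin n ⊕ Fin n) (Fin n ⊕ Fin n) ℝ) (e f : Fin n → V2 n)
    (c : Fin n → ℝ) :
    (graphSpan e f c).map g.mulVecLin = graphSpan (g *ᵥ e ·) (g *ᵥ f ·) c := by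
  rw [graphSpan, Submodule.map_span, ← range_comp]
  congr 2
  ext1 i
  simp [mulVec_add, mulVec_smul]

lemma map_graphQuadruple (g : Matrix (Fin n ⊕ Fin n) (Fin n ⊕ Fin n) ℝ) (e f : Fin n → V2 n)
    (d : Fin n → ℝ) :
    (graphQuadruple e f d).map g = graphQuadruple (g *ᵥ e ·) (g *ᵥ f ·) d := by
  simp only [graphQuadruple, Quadruple.map, map_graphSpan, Submodule.map_span, ← range_comp]
  rfl

lemma graphQuadruple_std_map_basisMatrix (e f : Fin n → V2 n) (d : Fin n → ℝ) :
    (graphQuadruple (stdE n) (stdF n) d).map (basisMatrix e f) = graphQuadruple e f d := by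
  simp only [map_graphQuadruple, basisMatrix_mulVec_stdE, basisMatrix_mulVec_stdF]

lemma standardPosition_diagonal_iff {e f : Fin n → V2 n} {L1 M1 L2 M2 : Submodule ℝ (V2 n)}
    {d : Fin n → ℝ} :
    StandardPosition n e f L1 M1 L2 M2 (diagonal d) ↔
      IsSymplecticBasis n e f ∧ InDelta n (diagonal d) ∧
        ⟨L1, M1, L2, M2⟩ = graphQuadruple e f d := by
  have h0 : span ℝ (range e) = graphSpan e f 0 := by simp [graphSpan]
  have h1 : span ℝ (range (e + f)) = graphSpan e f 1 := by simp [graphSpan, Pi.add_def]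
  have hd : span ℝ (range (e - tmul n f (diagonal d))) = graphSpan e f (-d) := by
    congr 2
    ext1 i
    simp [tmul_diagonal, sub_eq_add_neg]
  simp only [StandardPosition, graphQuadruple, Quadruple.mk.injEq, h0, h1, hd]
  tauto

end GraphQuadruple

open Polynomial in
lemma eq_of_mul_diagonal_eq_diagonal_mul {K : Type*} [CommRing K] [IsDomain K] [PartialOrder K]
    {n : ℕ} {A : Matrix (Fin n) (Fin n) K} {d d' : Fin n → K} (hA : IsUnit A.det)
    (hd : Monotone d) (hd' : Monotone d') (h : A * diagonal d = diagonal d' * A) : d = d' := by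
  have hconj : diagonal d' = A * diagonal d * A⁻¹ := by
    rw [h, Matrix.mul_assoc, mul_nonsing_inv _ hA, Matrix.mul_one]
  have hchar : (diagonal d').charpoly = (diagonal d).charpoly := by
    rw [hconj]
    exact charpoly_units_conj ((A.isUnit_iff_isUnit_det.mpr hA).unit) _
  have hroots (v : Fin n → K) : (diagonal v).charpoly.roots = ↑(List.ofFn v) := by
    simpa [charpoly_diagonal, Finset.prod_eq_multiset_prod, Multiset.map_map, Function.comp_def]
      using roots_multiset_prod_X_sub_C (Finset.univ.val.map v)
  have hperm : (List.ofFn d).Perm (List.ofFn d') := by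
    rw [← Multiset.coe_eq_coe, ← hroots, ← hroots, hchar]
  exact List.ofFn_injective <| hperm.eq_of_pairwise' (r := (· ≤ ·))
    (List.pairwise_ofFn.mpr fun _ _ hij => hd hij.le)
    (List.pairwise_ofFn.mpr fun _ _ hij => hd' hij.le)

section StandardModel

variable {n : ℕ}

lemma sum_smul_stdE_add_smul_stdF (a c : Fin n → ℝ) :
    ∑ i, a i • (stdE n i + c i • stdF n i) = Sum.elim a (c * a) := by
  ext (j | j) <;> simp [stdE, stdF, Finset.sum_apply, Pi.single_apply, mul_comm]

lemma sum_smul_stdF (a : Fin n → ℝ) : ∑ i, a i • stdF n i = Sum.elim (0 : Fin n → ℝ) a := by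
  ext (j | j) <;> simp [stdF, Finset.sum_apply, Pi.single_apply]

lemma mem_graphSpan_std {c : Fin n → ℝ} {x : V2 n} :
    x ∈ graphSpan (stdE n) (stdF n) c ↔ ∀ j, x (Sum.inr j) = c j * x (Sum.inl j) := by
  rw [graphSpan, mem_span_range_iff_exists_fun]
  simp only [sum_smul_stdE_add_smul_stdF]
  constructor
  · rintro ⟨a, rfl⟩ j
    simp
  · intro hx
    refine ⟨x ∘ Sum.inl, ?_⟩
    ext (j | j) <;> simp [hx]

lemma mem_span_range_stdF {x : V2 n} :
    x ∈ span ℝ (range (stdF n)) ↔ ∀ j, x (Sum.inl j) = 0 := by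
  rw [mem_span_range_iff_exists_fun]
  simp only [sum_smul_stdF]
  constructor
  · rintro ⟨a, rfl⟩ j
    simp
  · intro hx
    refine ⟨x ∘ Sum.inr, ?_⟩
    ext (j | j) <;> simp [hx]

variable {h : Matrix (Fin n ⊕ Fin n) (Fin n ⊕ Fin n) ℝ}

lemma apply_of_map_graphSpan_std_le {c c' : Fin n → ℝ}
    (hmap : (graphSpan (stdE n) (stdF n) c).map h.mulVecLin ≤ graphSpan (stdE n) (stdF n) c')
    (i j : Fin n) :
    h (.inr i) (.inl j) + c j * h (.inr i) (.inr j) =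
      c' i * (h (.inl i) (.inl j) + c j * h (.inl i) (.inr j)) := by
  have := mem_graphSpan_std.mp (hmap (mem_map_of_mem (subset_span ⟨j, rfl⟩))) i
  simpa [stdE, stdF, mulVec_add, mulVec_smul, mulVec_single_one] using this

lemma apply_of_map_span_range_stdF_le
    (hmap : (span ℝ (range (stdF n))).map h.mulVecLin ≤ span ℝ (range (stdF n))) (i j : Fin n) :
    h (.inl i) (.inr j) = 0 := by
  have := mem_span_range_stdF.mp (hmap (mem_map_of_mem (subset_span ⟨j, rfl⟩))) i
  simpa [stdF, mulVec_single_one] using this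

lemma eq_of_map_graphQuadruple_std_eq (hh : IsUnit h.det) {d d' : Fin n → ℝ} (hd : Monotone d)
    (hd' : Monotone d')
    (hmap : (graphQuadruple (stdE n) (stdF n) d).map h = graphQuadruple (stdE n) (stdF n) d') :
    d = d' := by
  simp only [Quadruple.map, graphQuadruple, Quadruple.mk.injEq] at hmap
  obtain ⟨hL1, hM1, hL2, hM2⟩ := hmap
  have h₂₁ (i j : Fin n) : h (.inr i) (.inl j) = 0 := by
    simpa using apply_of_map_graphSpan_std_le hL1.le i j
  have h₁₂ := apply_of_map_span_range_stdF_le hL2.le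
  have h₂₂ (i j : Fin n) : h (.inr i) (.inr j) = h (.inl i) (.inl j) := by
    simpa [h₂₁, h₁₂] using apply_of_map_graphSpan_std_le hM1.le i j
  have hcomm (i j : Fin n) : h (.inl i) (.inl j) * d j = d' i * h (.inl i) (.inl j) := by
    have := apply_of_map_graphSpan_std_le hM2.le i j
    simp only [h₂₁, h₁₂, h₂₂, Pi.neg_apply] at this
    linarith
  set A := h.toBlocks₁₁
  have hblocks : h = fromBlocks A 0 0 A := by
    ext (i | i) (j | j) <;> simp [A, toBlocks₁₁, h₂₁, h₁₂, h₂₂]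
  rw [hblocks, det_fromBlocks_zero₂₁, IsUnit.mul_iff] at hh
  refine eq_of_mul_diagonal_eq_diagonal_mul hh.1 hd hd' ?_
  ext i j
  simp [A, toBlocks₁₁, hcomm]

end StandardModel

lemma eq_iff_exists_isSymplectic_map_graphQuadruple {n : ℕ} {e f e' f' : Fin n → V2 n}
    {d d' : Fin n → ℝ} (hb : IsSymplecticBasis n e f) (hb' : IsSymplecticBasis n e' f')
    (hd : Monotone d) (hd' : Monotone d') :
    d = d' ↔ ∃ g, IsSymplectic n g ∧ (graphQuadruple e f d).map g = graphQuadruple e' f' d' := by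
  have hP := hb.isSymplectic_basisMatrix
  have hP' := hb'.isSymplectic_basisMatrix
  constructor
  · rintro rfl
    refine ⟨basisMatrix e' f' * (basisMatrix e f)⁻¹, hP'.mul hP.inv, ?_⟩
    rw [← graphQuadruple_std_map_basisMatrix e f, ← graphQuadruple_std_map_basisMatrix e' f',
      ← Quadruple.map_mul, Matrix.mul_assoc, nonsing_inv_mul _ hP.isUnit_det, Matrix.mul_one]
  · rintro ⟨g, hg, hmap⟩
    refine eq_of_map_graphQuadruple_std_eq ((hP'.inv.mul hg).mul hP).isUnit_det hd hd' ?_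
    rw [Quadruple.map_mul, Quadruple.map_mul, graphQuadruple_std_map_basisMatrix, hmap,
      ← graphQuadruple_std_map_basisMatrix e' f', Quadruple.map_inv_map hP'.isUnit_det]

section Positivity

variable {n : ℕ}

lemma sum_mul_sq_pos {ι : Type*} [Fintype ι] {w a : ι → ℝ} (hw : ∀ i, 0 < w i) (ha : a ≠ 0) :
    0 < ∑ i, w i * a i ^ 2 := by
  obtain ⟨i, hi⟩ := Function.ne_iff.mp ha
  exact Finset.sum_pos' (fun j _ => by have := hw j; positivity)
    ⟨i, Finset.mem_univ i, mul_pos (hw i) (sq_pos_of_ne_zero hi)⟩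

lemma isLagrangian_graphSpan_std (c : Fin n → ℝ) :
    IsLagrangian n (graphSpan (stdE n) (stdF n) c) := by
  refine ⟨?_, fun x hx y hy => ?_⟩
  · rw [graphSpan, finrank_span_eq_card, Fintype.card_fin]
    refine Fintype.linearIndependent_iff.mpr fun a ha i => ?_
    rw [sum_smul_stdE_add_smul_stdF] at ha
    simpa using congrFun ha (.inl i)
  · rw [mem_graphSpan_std] at hx hy
    rw [omegaForm_apply]
    exact Finset.sum_eq_zero fun i _ => by rw [hx, hy]; ring

lemma isLagrangian_span_range_stdF : IsLagrangian n (span ℝ (range (stdF n))) := by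
  refine ⟨?_, fun x hx y hy => ?_⟩
  · rw [finrank_span_eq_card, Fintype.card_fin]
    refine Fintype.linearIndependent_iff.mpr fun a ha i => ?_
    rw [sum_smul_stdF] at ha
    simpa using congrFun ha (.inr i)
  · rw [mem_span_range_stdF] at hx hy
    simp [omegaForm_apply, hx, hy]

lemma graphSpan_std_inf_graphSpan_std_eq_bot {c c' : Fin n → ℝ} (h : ∀ j, c j ≠ c' j) :
    graphSpan (stdE n) (stdF n) c ⊓ graphSpan (stdE n) (stdF n) c' = ⊥ := by
  refine eq_bot_iff.mpr fun x hx => ?_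
  obtain ⟨hx, hx'⟩ := mem_inf.mp hx
  rw [mem_graphSpan_std] at hx hx'
  have hl (j : Fin n) : x (.inl j) = 0 := by
    have : (c j - c' j) * x (.inl j) = 0 := by linarith [hx j, hx' j]
    exact (mul_eq_zero.mp this).resolve_left (sub_ne_zero.mpr (h j))
  rw [mem_bot]
  ext (j | j)
  · exact hl j
  · simp [hx j, hl j]

lemma graphSpan_std_inf_span_range_stdF_eq_bot (c : Fin n → ℝ) :
    graphSpan (stdE n) (stdF n) c ⊓ span ℝ (range (stdF n)) = ⊥ := by
  refine eq_bot_iff.mpr fun x hx => ?_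
  obtain ⟨hx, hx'⟩ := mem_inf.mp hx
  rw [mem_graphSpan_std] at hx
  rw [mem_span_range_stdF] at hx'
  rw [mem_bot]
  ext (j | j)
  · exact hx' j
  · simp [hx j, hx' j]

lemma exists_isGraphMap_graphSpan_std_of_pos {c : Fin n → ℝ} (hc : ∀ j, 0 < c j) :
    ∃ φ : graphSpan (stdE n) (stdF n) 0 →ₗ[ℝ] span ℝ (range (stdF n)),
      IsGraphMap n (graphSpan (stdE n) (stdF n) 0) (graphSpan (stdE n) (stdF n) c)
        (span ℝ (range (stdF n))) φ ∧
      ∀ v : graphSpan (stdE n) (stdF n) 0, v ≠ 0 → 0 < omegaForm n (v : V2 n) (φ v : V2 n) := by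
  let T := (fromBlocks 0 0 (diagonal c) 0 : Matrix (Fin n ⊕ Fin n) (Fin n ⊕ Fin n) ℝ).mulVecLin
  have hT (x : V2 n) : T x = Sum.elim (0 : Fin n → ℝ) (c * (x ∘ Sum.inl)) := by
    ext (j | j) <;> simp [T, fromBlocks_mulVec, mulVec_diagonal]
  have hmaps : ∀ x ∈ graphSpan (stdE n) (stdF n) 0, T x ∈ span ℝ (range (stdF n)) :=
    fun x _ => mem_span_range_stdF.mpr fun j => by simp [hT]
  refine ⟨T.restrict hmaps, fun x => ?_, fun ⟨v, hv⟩ hv0 => ?_⟩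
  · rw [mem_graphSpan_std]
    constructor
    · intro hx
      refine ⟨⟨Sum.elim (x ∘ Sum.inl) (0 : Fin n → ℝ), mem_graphSpan_std.mpr fun j => by simp⟩, ?_⟩
      ext (j | j) <;> simp [hT, hx]
    · rintro ⟨⟨u, hu⟩, rfl⟩ j
      rw [mem_graphSpan_std] at hu
      simp [hT, hu]
  · rw [mem_graphSpan_std] at hv
    have hvl : v ∘ Sum.inl ≠ 0 := fun h0 => hv0 <| Subtype.ext <| by
      ext (j | j)
      · exact congrFun h0 j
      · simpa using hv j
    convert sum_mul_sq_pos hc hvl using 1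
    simp only [LinearMap.restrict_apply, hT, omegaForm_apply, hv, Sum.elim_inl, Sum.elim_inr,
      Pi.mul_apply, Pi.zero_apply, Function.comp_apply]
    exact Finset.sum_congr rfl fun j _ => by ring

lemma exists_isGraphMap_span_range_stdF_of_neg {c : Fin n → ℝ} (hc : ∀ j, c j < 0) :
    ∃ ψ : span ℝ (range (stdF n)) →ₗ[ℝ] graphSpan (stdE n) (stdF n) 0,
      IsGraphMap n (span ℝ (range (stdF n))) (graphSpan (stdE n) (stdF n) c)
        (graphSpan (stdE n) (stdF n) 0) ψ ∧
      ∀ w : span ℝ (range (stdF n)), w ≠ 0 → 0 < omegaForm n (w : V2 n) (ψ w : V2 n) := by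
  let T := (fromBlocks 0 (diagonal c⁻¹) 0 0 : Matrix (Fin n ⊕ Fin n) (Fin n ⊕ Fin n) ℝ).mulVecLin
  have hT (x : V2 n) : T x = Sum.elim (c⁻¹ * (x ∘ Sum.inr)) (0 : Fin n → ℝ) := by
    ext (j | j) <;> simp [T, fromBlocks_mulVec, mulVec_diagonal]
  have hmaps : ∀ x ∈ span ℝ (range (stdF n)), T x ∈ graphSpan (stdE n) (stdF n) 0 :=
    fun x _ => mem_graphSpan_std.mpr fun j => by simp [hT]
  refine ⟨T.restrict hmaps, fun x => ?_, fun ⟨w, hw⟩ hw0 => ?_⟩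
  · rw [mem_graphSpan_std]
    constructor
    · intro hx
      refine ⟨⟨Sum.elim (0 : Fin n → ℝ) (x ∘ Sum.inr),
        mem_span_range_stdF.mpr fun j => by simp⟩, ?_⟩
      ext (j | j) <;> simp [hT, hx, (hc j).ne]
    · rintro ⟨⟨u, hu⟩, rfl⟩ j
      rw [mem_span_range_stdF] at hu
      simp [hT, hu, (hc j).ne]
  · rw [mem_span_range_stdF] at hw
    have hwr : w ∘ Sum.inr ≠ 0 := fun h0 => hw0 <| Subtype.ext <| by
      ext (j | j)
      · simpa using hw j
      · exact congrFun h0 j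
    convert sum_mul_sq_pos (fun j => neg_pos.mpr (inv_lt_zero.mpr (hc j))) hwr using 1
    simp only [LinearMap.restrict_apply, hT, omegaForm_apply, hw, Sum.elim_inl, Sum.elim_inr,
      Pi.mul_apply, Pi.zero_apply, Pi.inv_apply, Function.comp_apply]
    exact Finset.sum_congr rfl fun j _ => by ring

lemma positiveQuadruple_std {d : Fin n → ℝ} (hd : ∀ j, 0 < d j) :
    PositiveQuadruple n (graphSpan (stdE n) (stdF n) 0) (graphSpan (stdE n) (stdF n) 1)
      (span ℝ (range (stdF n))) (graphSpan (stdE n) (stdF n) (-d)) :=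
  ⟨isLagrangian_graphSpan_std 0, isLagrangian_graphSpan_std 1, isLagrangian_span_range_stdF,
    isLagrangian_graphSpan_std (-d),
    graphSpan_std_inf_graphSpan_std_eq_bot fun _ => zero_ne_one,
    graphSpan_std_inf_span_range_stdF_eq_bot 1, graphSpan_std_inf_span_range_stdF_eq_bot 0,
    graphSpan_std_inf_graphSpan_std_eq_bot fun j => by simp [(hd j).ne'],
    graphSpan_std_inf_span_range_stdF_eq_bot (-d),
    exists_isGraphMap_graphSpan_std_of_pos fun _ => one_pos,
    exists_isGraphMap_span_range_stdF_of_neg fun j => neg_lt_zero.mpr (hd j)⟩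

end Positivity

theorem positive_quadruple_classification (n : ℕ) :
    -- two positive quadruples have the same invariant `Λ` iff they are in the same
    -- `Sp(2n,ℝ)`-orbit
    (∀ L1 M1 L2 M2 L1' M1' L2' M2' : Submodule ℝ (V2 n),
      PositiveQuadruple n L1 M1 L2 M2 → PositiveQuadruple n L1' M1' L2' M2' →
      ∀ e f Λ e' f' Λ',
        StandardPosition n e f L1 M1 L2 M2 Λ →
        StandardPosition n e' f' L1' M1' L2' M2' Λ' →
        (Λ = Λ' ↔ ∃ g, IsSymplectic n g ∧
          L1.map g.mulVecLin = L1' ∧ M1.map g.mulVecLin = M1' ∧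
          L2.map g.mulVecLin = L2' ∧ M2.map g.mulVecLin = M2')) ∧
    -- every `Λ ∈ Δ_n` is the invariant of some positive quadruple
    (∀ Λ, InDelta n Λ → ∃ (L1 M1 L2 M2 : Submodule ℝ (V2 n)) (e f : Fin n → V2 n),
      PositiveQuadruple n L1 M1 L2 M2 ∧ StandardPosition n e f L1 M1 L2 M2 Λ) := by
  refine ⟨fun L1 M1 L2 M2 L1' M1' L2' M2' _ _ e f Λ e' f' Λ' hstd hstd' => ?_, fun Λ hΛ => ?_⟩
  · obtain ⟨d, rfl, -, hd⟩ := hstd.2.1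
    obtain ⟨d', rfl, -, hd'⟩ := hstd'.2.1
    obtain ⟨hb, -, hQ⟩ := standardPosition_diagonal_iff.mp hstd
    obtain ⟨hb', -, hQ'⟩ := standardPosition_diagonal_iff.mp hstd'
    have key := eq_iff_exists_isSymplectic_map_graphQuadruple hb hb' hd hd'
    simp only [← hQ, ← hQ', Quadruple.map, Quadruple.mk.injEq] at key
    rw [diagonal_injective.eq_iff, key]
  · obtain ⟨d, rfl, hpos, hmono⟩ := hΛ
    exact ⟨_, _, _, _, stdE n, stdF n, positiveQuadruple_std hpos,
      standardPosition_diagonal_iff.mpr ⟨isSymplecticBasis_std, ⟨d, rfl, hpos, hmono⟩, rfl⟩⟩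
end
end

section
/- Noncommutative Ptolemy relation: let v_1, v_2, v_3, v_4 be decorated Lagrangians in (ℝ^{2n}, ω) such that v_1 and v_3 are transverse. Then Λ_{24} = Λ_{23}Λ_{13}^{−1}Λ_{14} + Λ_{21}Λ_{31}^{−1}Λ_{34}. -/
open Matrix

noncomputable section

/-- A decorated Lagrangian: a basis `v` of a Lagrangian subspace of `ℝ^{2n}`. -/
def IsDecorated (n : ℕ) (v : Fin n → V2 n) : Prop :=
  LinearIndependent ℝ v ∧ IsLagrangian n (Submodule.span ℝ (Set.range v))

/-- The symplectic `Λ`-length of two decorated Lagrangians: `(Λ_{v,w})_{ij} = ω(v_i, w_j)`. -/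
def LamM (n : ℕ) (v w : Fin n → V2 n) : Matrix (Fin n) (Fin n) ℝ :=
  fun i j => omegaForm n (v i) (w j)

/-- `ω` as a linear map in the second argument. -/
def omegaR (n : ℕ) (x : V2 n) : V2 n →ₗ[ℝ] ℝ where
  toFun y := omegaForm n x y
  map_add' y z := by simp [omegaForm, Matrix.mulVec_add, dotProduct_add]
  map_smul' c y := by simp [omegaForm, Matrix.mulVec_smul, dotProduct_smul, smul_eq_mul]

/-- `ω` as a linear map in the first argument. -/
def omegaL (n : ℕ) (y : V2 n) : V2 n →ₗ[ℝ] ℝ where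
  toFun x := omegaForm n x y
  map_add' x z := by simp [omegaForm, add_dotProduct]
  map_smul' c x := by simp [omegaForm, smul_dotProduct, smul_eq_mul]

lemma omega_skew (n : ℕ) (x y : V2 n) : omegaForm n x y = - omegaForm n y x := by
  have hJ : (Jn n)ᵀ = -(Jn n) := by
    simp [Jn, Matrix.fromBlocks_transpose, Matrix.fromBlocks_neg]
  rw [omegaForm, omegaForm, Matrix.dotProduct_mulVec, ← Matrix.mulVec_transpose, hJ,
    Matrix.neg_mulVec, neg_dotProduct, dotProduct_comm]

lemma omega_nondeg (n : ℕ) (w : V2 n) (h : ∀ y, omegaForm n y w = 0) : w = 0 := by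
  have hJ : (Jn n).mulVec w = 0 := by
    funext k
    have := h (Pi.single k 1)
    simpa [omegaForm, Pi.single_apply, dotProduct] using this
  have : (-(Jn n)) *ᵥ ((Jn n) *ᵥ w) = w := by
    rw [Matrix.mulVec_mulVec]
    rw [show (-(Jn n)) * Jn n = 1 by
      simp [Jn, Matrix.fromBlocks_multiply, Matrix.fromBlocks_neg, ← Matrix.fromBlocks_one]]
    simp
  rw [hJ] at this
  simpa using this.symm

/-- The noncommutative Ptolemy relation for symplectic `Λ`-lengths. -/
theorem ptolemy_relation (n : ℕ) (v1 v2 v3 v4 : Fin n → V2 n)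
    (h1 : IsDecorated n v1) (h2 : IsDecorated n v2)
    (h3 : IsDecorated n v3) (h4 : IsDecorated n v4)
    (h13 : Submodule.span ℝ (Set.range v1) ⊓ Submodule.span ℝ (Set.range v3) = ⊥) :
    LamM n v2 v4 = LamM n v2 v3 * (LamM n v1 v3)⁻¹ * LamM n v1 v4
      + LamM n v2 v1 * (LamM n v3 v1)⁻¹ * LamM n v3 v4 := by
  rcases Nat.eq_zero_or_pos n with hn | hn
  · subst hn; ext i j; exact i.elim0
  haveI : Nonempty (Fin n ⊕ Fin n) := ⟨Sum.inl ⟨0, hn⟩⟩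
  -- the combined family is a basis
  have hli : LinearIndependent ℝ (Sum.elim v1 v3) :=
    h1.1.sum_type h3.1 (disjoint_iff.mpr h13)
  have card_eq : Fintype.card (Fin n ⊕ Fin n) = Module.finrank ℝ (V2 n) := by
    simp [Module.finrank_fintype_fun_eq_card]
  set B := basisOfLinearIndependentOfCardEqFinrank hli card_eq with hBdef
  have hB : ⇑B = Sum.elim v1 v3 := coe_basisOfLinearIndependentOfCardEqFinrank _ _
  -- decomposition coefficients of v4
  set C : Matrix (Fin n) (Fin n) ℝ := fun i j => B.repr (v4 j) (Sum.inl i) with hC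
  set D : Matrix (Fin n) (Fin n) ℝ := fun i j => B.repr (v4 j) (Sum.inr i) with hD
  have hsum : ∀ j, v4 j = (∑ i, C i j • v1 i) + ∑ i, D i j • v3 i := by
    intro j
    have := B.sum_repr (v4 j)
    rw [Fintype.sum_sum_type] at this
    simp only [hB, Sum.elim_inl, Sum.elim_inr] at this
    exact this.symm
  -- main expansion
  have hM : ∀ w : Fin n → V2 n, LamM n w v4 = LamM n w v1 * C + LamM n w v3 * D := by
    intro w
    ext p j
    show omegaForm n (w p) (v4 j) = _
    rw [hsum j]
    show omegaR n (w p) _ = _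
    rw [map_add, map_sum, map_sum]
    simp only [_root_.map_smul, smul_eq_mul, Matrix.add_apply, Matrix.mul_apply]
    congr 1 <;> exact Finset.sum_congr rfl fun i _ => mul_comm _ _

  have h11 : LamM n v1 v1 = 0 := by
    ext i j
    exact h1.2.2 _ (Submodule.subset_span (Set.mem_range_self i)) _
      (Submodule.subset_span (Set.mem_range_self j))
  have h33 : LamM n v3 v3 = 0 := by
    ext i j
    exact h3.2.2 _ (Submodule.subset_span (Set.mem_range_self i)) _
      (Submodule.subset_span (Set.mem_range_self j))
  have e14 : LamM n v1 v4 = LamM n v1 v3 * D := by rw [hM v1, h11]; simp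
  have e34 : LamM n v3 v4 = LamM n v3 v1 * C := by rw [hM v3, h33]; simp
  -- invertibility of Λ₁₃
  have hinj : Function.Injective ((LamM n v1 v3).mulVec) := by
    have : Function.Injective ((LamM n v1 v3).mulVecLin) := by
      rw [← LinearMap.ker_eq_bot, LinearMap.ker_eq_bot']
      intro x hx
      have hx' : ∀ i, ∑ j, LamM n v1 v3 i j * x j = 0 := by
        intro i
        have := congrFun hx i
        simpa [Matrix.mulVecLin_apply, Matrix.mulVec, dotProduct] using this
      set w : V2 n := ∑ j, x j • v3 j with hw
      have hw1 : ∀ i, omegaForm n (v1 i) w = 0 := by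
        intro i
        show omegaR n (v1 i) w = 0
        rw [hw, map_sum]
        simp only [_root_.map_smul, smul_eq_mul]
        rw [← hx' i]
        exact Finset.sum_congr rfl fun j _ => mul_comm _ _
      have hw3 : ∀ i, omegaForm n (v3 i) w = 0 := by
        intro i
        show omegaR n (v3 i) w = 0
        rw [hw, map_sum]
        simp only [_root_.map_smul, smul_eq_mul]
        refine Finset.sum_eq_zero fun j _ => ?_
        exact mul_eq_zero_of_right _ (congrFun (congrFun h33 i) j)
      have hall : ∀ y, omegaForm n y w = 0 := by
        intro y
        have hy := B.sum_repr y
        calc omegaForm n y w = omegaL n w y := rfl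
          _ = omegaL n w (∑ k, B.repr y k • B k) := by rw [hy]
          _ = 0 := by
              rw [map_sum]
              refine Finset.sum_eq_zero fun k _ => ?_
              rw [_root_.map_smul, smul_eq_mul]
              rcases k with i | i
              · have : omegaL n w (B (Sum.inl i)) = 0 := by
                  show omegaForm n (B (Sum.inl i)) w = 0
                  rw [hB]; exact hw1 i
                rw [this, mul_zero]
              · have : omegaL n w (B (Sum.inr i)) = 0 := by
                  show omegaForm n (B (Sum.inr i)) w = 0
                  rw [hB]; exact hw3 i
                rw [this, mul_zero]
      have hw0 : w = 0 := omega_nondeg n w hall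
      have hx0 : ∀ j, x j = 0 :=
        Fintype.linearIndependent_iff.mp h3.1 x (by rw [← hw]; exact hw0)
      funext j; exact hx0 j
    intro a b hab
    exact this (by simpa [Matrix.mulVecLin_apply] using hab)
  have hu13 : IsUnit (LamM n v1 v3).det :=
    (Matrix.isUnit_iff_isUnit_det _).mp (Matrix.mulVec_injective_iff_isUnit.mp hinj)
  have h31 : LamM n v3 v1 = -(LamM n v1 v3)ᵀ := by
    ext i j
    show omegaForm n (v3 i) (v1 j) = -omegaForm n (v1 j) (v3 i)
    exact omega_skew n _ _
  have hu31 : IsUnit (LamM n v3 v1).det := by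
    rw [h31, Matrix.det_neg, Matrix.det_transpose]
    exact (isUnit_one.neg.pow _).mul hu13
  rw [hM v2, e14, e34, Matrix.mul_assoc (LamM n v2 v3),
    Matrix.nonsing_inv_mul_cancel_left _ _ hu13, Matrix.mul_assoc (LamM n v2 v1),
    Matrix.nonsing_inv_mul_cancel_left _ _ hu31]
  exact add_comm _ _
end
end
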